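/- arXiv:2410.22146 — 3 statements merged into one kernel-verified Lean document; each statement's English description precedes it below -/
import Mathlib

section
/- For every λ > 1 there exists s ∈ (0, λ+1) such that e^{s}·((λ+1) − s) = s + (λ+1). Consequently, there exists an eigenvalue μ := s² − 1 ∈ (−1, (λ+1)² − 1) of the linearized problem at the trivial equilibrium, i.e., a function φ, not identically zero on [0,1], twice differentiable with φ'' = (1+μ)φ on [0,1], −φ'(0) = (λ+1)φ(0) and φ'(1) = (λ+1)φ(1). Thus for λ > 1 a second eigenvalue above −1 appears. -/
/-!
For `c = λ + 1 > 2` the function `f s = eˢ (c - s) - (s + c)` vanishes at `0` with slope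
`f' 0 = c - 2 > 0`; quantitatively `eˢ ≥ 1 + s` gives `f ((c - 2) / 2) > 0`, while `f c = -2c < 0`,
so the intermediate value theorem yields a root `s ∈ (0, c)`. For such `s` the eigenfunction is
`φ x = (s - c) eˢˣ + (s + c) e⁻ˢˣ`: it solves `φ'' = s² φ`, the Robin condition at `0` holds for
every `s`, and the one at `1` reduces to `e²ˢ (s - c)² = (s + c)²`, the square of the root equation.
-/

open Real

theorem exists_exp_mul_sub_eq_add {c : ℝ} (hc : 2 < c) :
    ∃ s ∈ Set.Ioo 0 c, exp s * (c - s) = s + c := by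
  set f : ℝ → ℝ := fun s => exp s * (c - s) - (s + c)
  set a := (c - 2) / 2 with ha_def
  have ha : 0 < a := by positivity
  have hfa : 0 < f a := by
    have : (1 + a) * (c - a) - (a + c) = a ^ 2 := by ring
    nlinarith [add_one_le_exp a]
  have hfc : f c < 0 := by simp only [f, sub_self, mul_zero]; linarith
  obtain ⟨s, ⟨has, hsc⟩, hfs⟩ :=
    intermediate_value_Ioo' (by rw [ha_def]; linarith) (by fun_prop) ⟨hfc, hfa⟩
  exact ⟨s, ⟨ha.trans has, hsc⟩, sub_eq_zero.mp hfs⟩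

noncomputable def expCombo (p q s x : ℝ) : ℝ := p * exp (s * x) + q * exp (-(s * x))

theorem hasDerivAt_expCombo (p q s x : ℝ) :
    HasDerivAt (expCombo p q s) (expCombo (p * s) (-(q * s)) s x) x := by
  have hlin : HasDerivAt (fun x : ℝ => s * x) s x := by
    simpa using (hasDerivAt_id x).const_mul s
  have hpos : HasDerivAt (fun x => exp (s * x)) (exp (s * x) * s) x :=
    (hasDerivAt_exp _).comp x hlin
  have hneg : HasDerivAt (fun x => exp (-(s * x))) (exp (-(s * x)) * -s) x :=
    (hasDerivAt_exp _).comp x hlin.neg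
  exact ((hpos.const_mul p).add (hneg.const_mul q)).congr_deriv (by simp only [expCombo]; ring)

theorem differentiable_expCombo (p q s : ℝ) : Differentiable ℝ (expCombo p q s) :=
  fun x => (hasDerivAt_expCombo p q s x).differentiableAt

theorem deriv_expCombo (p q s : ℝ) :
    deriv (expCombo p q s) = expCombo (p * s) (-(q * s)) s :=
  funext fun x => (hasDerivAt_expCombo p q s x).deriv

theorem deriv_deriv_expCombo (p q s x : ℝ) :
    deriv (deriv (expCombo p q s)) x = s ^ 2 * expCombo p q s x := by
  simp only [deriv_expCombo, expCombo]
  ring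

theorem expCombo_robin_zero (s c : ℝ) :
    -deriv (expCombo (s - c) (s + c) s) 0 = c * expCombo (s - c) (s + c) s 0 := by
  simp only [deriv_expCombo, expCombo, mul_zero, neg_zero, exp_zero]
  ring

theorem expCombo_robin_one {s c : ℝ} (h : exp (2 * s) * (s - c) ^ 2 = (s + c) ^ 2) :
    deriv (expCombo (s - c) (s + c) s) 1 = c * expCombo (s - c) (s + c) s 1 := by
  simp only [deriv_expCombo, expCombo, mul_one, exp_neg]
  rw [two_mul, exp_add] at h
  field_simp
  linear_combination h

/-- For every λ > 1 there is s ∈ (0, λ+1) with e^s((λ+1)-s) = s+(λ+1), yielding a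
second eigenvalue μ = s² - 1 ∈ (-1, (λ+1)² - 1) of the linearization at the
trivial equilibrium. -/
theorem second_eigenvalue_exists (lam : ℝ) (hlam : 1 < lam) :
    ∃ s : ℝ, 0 < s ∧ s < lam + 1 ∧
      Real.exp s * ((lam + 1) - s) = s + (lam + 1) ∧
      -1 < s ^ 2 - 1 ∧ s ^ 2 - 1 < (lam + 1) ^ 2 - 1 ∧
      ∃ φ : ℝ → ℝ, (∃ x ∈ Set.Icc (0:ℝ) 1, φ x ≠ 0) ∧
        Differentiable ℝ φ ∧ Differentiable ℝ (deriv φ) ∧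
        (∀ x ∈ Set.Icc (0:ℝ) 1, deriv (deriv φ) x = (1 + (s ^ 2 - 1)) * φ x) ∧
        -(deriv φ 0) = (lam + 1) * φ 0 ∧
        deriv φ 1 = (lam + 1) * φ 1 := by
  obtain ⟨s, ⟨hs0, hsc⟩, hroot⟩ := exists_exp_mul_sub_eq_add (c := lam + 1) (by linarith)
  have hdispersion : exp (2 * s) * (s - (lam + 1)) ^ 2 = (s + (lam + 1)) ^ 2 := by
    rw [two_mul, exp_add, ← hroot]
    ring
  refine ⟨s, hs0, hsc, hroot, by nlinarith, by nlinarith,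
    expCombo (s - (lam + 1)) (s + (lam + 1)) s, ⟨0, by simp, ?_⟩, differentiable_expCombo _ _ _,
    by rw [deriv_expCombo]; exact differentiable_expCombo _ _ _,
    fun x _ => by rw [deriv_deriv_expCombo]; ring,
    expCombo_robin_zero s (lam + 1), expCombo_robin_one hdispersion⟩
  simp only [expCombo, mul_zero, neg_zero, exp_zero]
  linarith
end

section
/- Let e denote Euler's number and σ₂ := (e+1)/(e−1). For every λ > σ₂ there exist μ₁ > μ₂ > 0 and functions φ₁, φ₂ : ℝ → ℝ, each not identically zero on [0,1] and twice differentiable, with φᵢ''(x) = (1+μᵢ)·φᵢ(x) for all x ∈ [0,1], −φᵢ'(0) = λ·φᵢ(0) and φᵢ'(1) = λ·φᵢ(1), for i = 1, 2. That is, for λ > σ₂ the linearization at infinity has at least two distinct positive eigenvalues. -/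
/-!
The eigenfunctions are sought symmetric or antisymmetric about `x = 1/2`: `cosh (ω (x - 1/2))`
and `sinh (ω (x - 1/2))` solve `φ'' = ω² φ`, i.e. have `μ = ω² - 1`, and the two Robin conditions
collapse to the single equation `ω tanh (ω/2) = λ` (even mode) resp. `ω coth (ω/2) = λ` (odd mode).
Since `coth (1/2) = (e + 1)/(e - 1)`, the odd equation has a root `ω₂ > 1` once `λ > σ₂`.
As `tanh < coth`, the even left-hand side is still below `λ` at `ω₂`, while it exceeds `λ` at
`λ + 2`; this gives a root `ω₁ > ω₂` of the even equation.
-/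

open Real Set

def IsRobinEigenfunction (lam μ : ℝ) (φ : ℝ → ℝ) : Prop :=
  (∃ x ∈ Icc (0:ℝ) 1, φ x ≠ 0) ∧
    Differentiable ℝ φ ∧ Differentiable ℝ (deriv φ) ∧
    (∀ x ∈ Icc (0:ℝ) 1, deriv (deriv φ) x = (1 + μ) * φ x) ∧
    -(deriv φ 0) = lam * φ 0 ∧
    deriv φ 1 = lam * φ 1

noncomputable def evenMode (ω x : ℝ) : ℝ := cosh (ω * (x - 1/2))

noncomputable def oddMode (ω x : ℝ) : ℝ := sinh (ω * (x - 1/2))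

section Modes

variable (ω : ℝ)

lemma hasDerivAt_mul_sub_half (x : ℝ) : HasDerivAt (fun y : ℝ => ω * (y - 1/2)) ω x := by
  simpa using ((hasDerivAt_id x).sub_const (1/2 : ℝ)).const_mul ω

lemma hasDerivAt_evenMode (x : ℝ) : HasDerivAt (evenMode ω) (ω * oddMode ω x) x :=
  (hasDerivAt_mul_sub_half ω x).cosh.congr_deriv (mul_comm _ _)

lemma hasDerivAt_oddMode (x : ℝ) : HasDerivAt (oddMode ω) (ω * evenMode ω x) x :=
  (hasDerivAt_mul_sub_half ω x).sinh.congr_deriv (mul_comm _ _)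

lemma differentiable_evenMode : Differentiable ℝ (evenMode ω) :=
  fun x => (hasDerivAt_evenMode ω x).differentiableAt

lemma differentiable_oddMode : Differentiable ℝ (oddMode ω) :=
  fun x => (hasDerivAt_oddMode ω x).differentiableAt

lemma deriv_evenMode : deriv (evenMode ω) = fun x => ω * oddMode ω x :=
  funext fun x => (hasDerivAt_evenMode ω x).deriv

lemma deriv_oddMode : deriv (oddMode ω) = fun x => ω * evenMode ω x :=
  funext fun x => (hasDerivAt_oddMode ω x).deriv

@[simp] lemma evenMode_zero : evenMode ω 0 = cosh (ω / 2) := by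
  rw [evenMode, ← cosh_neg]; ring_nf

@[simp] lemma evenMode_one : evenMode ω 1 = cosh (ω / 2) := by
  rw [evenMode]; ring_nf

@[simp] lemma oddMode_zero : oddMode ω 0 = -sinh (ω / 2) := by
  rw [oddMode, ← sinh_neg]; ring_nf

@[simp] lemma oddMode_one : oddMode ω 1 = sinh (ω / 2) := by
  rw [oddMode]; ring_nf

variable {ω} {lam : ℝ}

lemma isRobinEigenfunction_evenMode (h : ω * sinh (ω / 2) = lam * cosh (ω / 2)) :
    IsRobinEigenfunction lam (ω ^ 2 - 1) (evenMode ω) := by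
  refine ⟨⟨0, by norm_num, by simp [(cosh_pos _).ne']⟩, differentiable_evenMode ω, ?_, ?_, ?_, ?_⟩
  · rw [deriv_evenMode]
    exact (differentiable_oddMode ω).const_mul ω
  · intro x _
    rw [deriv_evenMode, deriv_const_mul _ (differentiable_oddMode ω x), deriv_oddMode]
    ring
  · simp [deriv_evenMode, h]
  · simp [deriv_evenMode, h]

lemma isRobinEigenfunction_oddMode (hω : ω ≠ 0) (h : ω * cosh (ω / 2) = lam * sinh (ω / 2)) :
    IsRobinEigenfunction lam (ω ^ 2 - 1) (oddMode ω) := by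
  refine ⟨⟨0, by norm_num, by simpa [sinh_eq_zero] using hω⟩, differentiable_oddMode ω, ?_, ?_, ?_,
    ?_⟩
  · rw [deriv_oddMode]
    exact (differentiable_evenMode ω).const_mul ω
  · intro x _
    rw [deriv_oddMode, deriv_const_mul _ (differentiable_evenMode ω x), deriv_evenMode]
    ring
  · simp [deriv_oddMode, h]
  · simp [deriv_oddMode, h]

end Modes

section Frequencies

variable {lam : ℝ}

lemma cosh_half_mul_exp_one_sub_one :
    cosh (1 / 2) * (exp 1 - 1) = sinh (1 / 2) * (exp 1 + 1) := by
  have hsq : exp (1 / 2) * exp (1 / 2) = exp 1 := by rw [← exp_add]; norm_num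
  rw [cosh_eq, sinh_eq, ← hsq, exp_neg]
  field_simp

lemma exists_odd_frequency (hlam : (exp 1 + 1) / (exp 1 - 1) < lam) :
    ∃ ω, 1 < ω ∧ ω ≤ lam ∧ ω * cosh (ω / 2) = lam * sinh (ω / 2) := by
  have he : 0 < exp 1 - 1 := by linarith [add_one_lt_exp one_ne_zero]
  have hlam' : exp 1 + 1 < lam * (exp 1 - 1) := (div_lt_iff₀ he).mp hlam
  have hlam1 : 1 < lam := by nlinarith
  have hsinh : 0 < sinh (1 / 2 : ℝ) := sinh_pos_iff.mpr (by norm_num)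
  set G : ℝ → ℝ := fun ω => ω * cosh (ω / 2) - lam * sinh (ω / 2)
  have hG1 : G 1 < 0 := by
    have := cosh_half_mul_exp_one_sub_one
    simp only [G, one_div] at this ⊢
    nlinarith
  have hGlam : 0 ≤ G lam := by
    have := sinh_lt_cosh (lam / 2)
    simp only [G]
    nlinarith
  obtain ⟨ω, ⟨h1, hle⟩, hω⟩ :=
    intermediate_value_Icc hlam1.le (by fun_prop : Continuous G).continuousOn ⟨hG1.le, hGlam⟩
  refine ⟨ω, lt_of_le_of_ne h1 ?_, hle, sub_eq_zero.mp hω⟩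
  rintro rfl
  exact hG1.ne hω

lemma even_lt_of_odd_frequency {ω : ℝ} (hω : 0 < ω) (h : ω * cosh (ω / 2) = lam * sinh (ω / 2)) :
    ω * sinh (ω / 2) < lam * cosh (ω / 2) := by
  have hsinh : 0 < sinh (ω / 2) := sinh_pos_iff.mpr (by linarith)
  have hcosh : lam * cosh (ω / 2) * sinh (ω / 2) = ω * cosh (ω / 2) ^ 2 := by
    linear_combination (-cosh (ω / 2)) * h
  have hsinh_sq : ω * sinh (ω / 2) ^ 2 = ω * cosh (ω / 2) ^ 2 - ω := by
    linear_combination (-ω) * cosh_sq_sub_sinh_sq (ω / 2)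
  refine lt_of_mul_lt_mul_right ?_ hsinh.le
  nlinarith

lemma add_two_mul_sinh_sub_mul_cosh_pos :
    0 < (lam + 2) * sinh ((lam + 2) / 2) - lam * cosh ((lam + 2) / 2) := by
  set M := lam + 2
  have hrw : M * sinh (M / 2) - lam * cosh (M / 2) = 2 * cosh (M / 2) - M * exp (-(M / 2)) := by
    rw [← cosh_sub_sinh]; ring
  have hprod : exp (M / 2) * exp (-(M / 2)) = 1 := by rw [← exp_add]; simp
  have hsq : M + 1 ≤ exp (M / 2) * exp (M / 2) := by rw [← exp_add]; simpa using add_one_le_exp M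
  have hpos := exp_pos (M / 2)
  -- after multiplying by `exp (M/2)` this is `exp M + 1 > M`
  rw [hrw, cosh_eq]
  nlinarith [exp_pos (-(M / 2))]

lemma exists_even_frequency_gt {ω₀ : ℝ} (h₀ : ω₀ * sinh (ω₀ / 2) < lam * cosh (ω₀ / 2))
    (hle : ω₀ ≤ lam + 2) : ∃ ω, ω₀ < ω ∧ ω * sinh (ω / 2) = lam * cosh (ω / 2) := by
  set F : ℝ → ℝ := fun ω => ω * sinh (ω / 2) - lam * cosh (ω / 2)
  have hF₀ : F ω₀ < 0 := sub_neg.mpr h₀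
  obtain ⟨ω, ⟨h1, -⟩, hω⟩ := intermediate_value_Icc hle (by fun_prop : Continuous F).continuousOn
    ⟨hF₀.le, add_two_mul_sinh_sub_mul_cosh_pos.le⟩
  refine ⟨ω, lt_of_le_of_ne h1 ?_, sub_eq_zero.mp hω⟩
  rintro rfl
  exact hF₀.ne hω

end Frequencies

/-- For λ > σ₂ = (e+1)/(e-1), the linearization at infinity has at least two
distinct positive eigenvalues. -/
theorem two_positive_eigenvalues_at_infinity (lam : ℝ)
    (hlam : (Real.exp 1 + 1) / (Real.exp 1 - 1) < lam) :
    ∃ μ₁ μ₂ : ℝ, μ₂ < μ₁ ∧ 0 < μ₂ ∧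
      (∃ φ₁ : ℝ → ℝ, (∃ x ∈ Set.Icc (0:ℝ) 1, φ₁ x ≠ 0) ∧
        Differentiable ℝ φ₁ ∧ Differentiable ℝ (deriv φ₁) ∧
        (∀ x ∈ Set.Icc (0:ℝ) 1, deriv (deriv φ₁) x = (1 + μ₁) * φ₁ x) ∧
        -(deriv φ₁ 0) = lam * φ₁ 0 ∧
        deriv φ₁ 1 = lam * φ₁ 1) ∧
      (∃ φ₂ : ℝ → ℝ, (∃ x ∈ Set.Icc (0:ℝ) 1, φ₂ x ≠ 0) ∧
        Differentiable ℝ φ₂ ∧ Differentiable ℝ (deriv φ₂) ∧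
        (∀ x ∈ Set.Icc (0:ℝ) 1, deriv (deriv φ₂) x = (1 + μ₂) * φ₂ x) ∧
        -(deriv φ₂ 0) = lam * φ₂ 0 ∧
        deriv φ₂ 1 = lam * φ₂ 1) := by
  obtain ⟨ω₂, hω₂, hω₂le, hodd⟩ := exists_odd_frequency hlam
  obtain ⟨ω₁, hω₁, heven⟩ := exists_even_frequency_gt
    (even_lt_of_odd_frequency (by linarith) hodd) (by linarith)
  refine ⟨ω₁ ^ 2 - 1, ω₂ ^ 2 - 1, by nlinarith, by nlinarith, ⟨evenMode ω₁, ?_⟩, ⟨oddMode ω₂, ?_⟩⟩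
  · exact isRobinEigenfunction_evenMode heven
  · exact isRobinEigenfunction_oddMode (by positivity) hodd
end

section
/- Let e denote Euler's number and σ₁ := (e−1)/(e+1). If λ < σ₁ and μ ≥ 0, then there is no function φ : ℝ → ℝ, not identically zero on [0,1], twice differentiable with φ''(x) = (1+μ)·φ(x) for all x ∈ [0,1], satisfying −φ'(0) = λ·φ(0) and φ'(1) = λ·φ(1). That is, for λ < σ₁ every eigenvalue of the linearization at infinity is strictly negative. -/
/-!
Multiplying `φ'' = (1 + μ) φ` by `φ` and integrating by parts, the Robin conditions give
`∫₀¹ (φ'² + (1 + μ) φ²) = λ (φ(0)² + φ(1)²)`. On the other hand `σ₁ = tanh (1/2)` is the sharp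
constant of the trace inequality `σ₁ (φ(0)² + φ(1)²) ≤ ∫₀¹ (φ'² + φ²)`: since `tanh' = 1 - tanh²`,
the derivative of `tanh (x - 1/2) φ²` is `φ'² + φ²` minus a square. For `λ < σ₁` and `μ ≥ 0` this
forces `φ(0) = φ(1) = 0`, so the energy vanishes and `φ = 0` on `[0, 1]`.
-/

open Set intervalIntegral

namespace Real

theorem hasDerivAt_tanh (x : ℝ) : HasDerivAt tanh (1 - tanh x ^ 2) x := by
  have h := (hasDerivAt_sinh x).div (hasDerivAt_cosh x) (cosh_pos x).ne'
  rw [show sinh / cosh = tanh from funext fun y => (tanh_eq_sinh_div_cosh y).symm] at h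
  refine h.congr_deriv ?_
  rw [tanh_eq_sinh_div_cosh]
  field_simp

@[fun_prop]
theorem continuous_tanh : Continuous tanh :=
  continuous_iff_continuousAt.2 fun x => (hasDerivAt_tanh x).continuousAt

theorem tanh_eq_exp_two_mul (x : ℝ) : tanh x = (exp (2 * x) - 1) / (exp (2 * x) + 1) := by
  rw [tanh_eq, exp_neg, two_mul, exp_add]
  have := exp_pos x
  field_simp

theorem tanh_one_half : tanh (1 / 2) = (exp 1 - 1) / (exp 1 + 1) := by
  rw [tanh_eq_exp_two_mul]; norm_num

end Real

open Real

variable {φ : ℝ → ℝ} {a b : ℝ}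

theorem integral_deriv_sq_add_mul_sq_eq (k : ℝ) (hab : a ≤ b) (hφ : Differentiable ℝ φ)
    (hφ' : Differentiable ℝ (deriv φ)) (hode : ∀ x ∈ Icc a b, deriv (deriv φ) x = k * φ x) :
    ∫ x in a..b, deriv φ x ^ 2 + k * φ x ^ 2 = φ b * deriv φ b - φ a * deriv φ a := by
  have hφc := hφ.continuous
  have hφ'c := hφ'.continuous
  have hcont : Continuous fun x => deriv φ x ^ 2 + k * φ x ^ 2 := by fun_prop
  refine integral_eq_sub_of_hasDerivAt (f := fun x => φ x * deriv φ x) (fun x hx => ?_)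
    (hcont.intervalIntegrable _ _)
  rw [uIcc_of_le hab] at hx
  refine ((hφ x).hasDerivAt.mul (hφ' x).hasDerivAt).congr_deriv ?_
  rw [hode x hx]; ring

theorem tanh_mul_sq_add_sq_le_integral (hab : a ≤ b) (hφ : Differentiable ℝ φ)
    (hφ' : Continuous (deriv φ)) :
    tanh ((b - a) / 2) * (φ a ^ 2 + φ b ^ 2) ≤ ∫ x in a..b, deriv φ x ^ 2 + φ x ^ 2 := by
  have hφc := hφ.continuous
  set w : ℝ → ℝ := fun x => tanh (x - (a + b) / 2)
  have hwc : Continuous w := by fun_prop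
  have hderiv : ∀ x, HasDerivAt (fun x => w x * φ x ^ 2)
      ((1 - w x ^ 2) * φ x ^ 2 + w x * (2 * φ x * deriv φ x)) x := fun x => by
    have hw : HasDerivAt w (1 - w x ^ 2) x := (hasDerivAt_tanh _).comp_sub_const x _
    exact (hw.mul ((hφ x).hasDerivAt.fun_pow 2)).congr_deriv (by ring)
  calc tanh ((b - a) / 2) * (φ a ^ 2 + φ b ^ 2) = w b * φ b ^ 2 - w a * φ a ^ 2 := by
        simp only [w]
        rw [show a - (a + b) / 2 = -((b - a) / 2) by ring, tanh_neg,
          show b - (a + b) / 2 = (b - a) / 2 by ring]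
        ring
    _ = ∫ x in a..b, (1 - w x ^ 2) * φ x ^ 2 + w x * (2 * φ x * deriv φ x) :=
        (integral_eq_sub_of_hasDerivAt (fun x _ => hderiv x)
          (by apply Continuous.intervalIntegrable; fun_prop)).symm
    _ ≤ ∫ x in a..b, deriv φ x ^ 2 + φ x ^ 2 :=
        integral_mono_on hab (by apply Continuous.intervalIntegrable; fun_prop)
          (by apply Continuous.intervalIntegrable; fun_prop) fun x _ => by
          -- `(w φ²)' = φ'² + φ² - (φ' - w φ)²`
          nlinarith [sq_nonneg (deriv φ x - w x * φ x)]

/-- For λ < σ₁ = (e-1)/(e+1), the linearization at infinity has no eigenvalue μ ≥ 0. -/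
theorem no_nonnegative_eigenvalue_at_infinity (lam μ : ℝ)
    (hlam : lam < (Real.exp 1 - 1) / (Real.exp 1 + 1)) (hμ : 0 ≤ μ) :
    ¬ ∃ φ : ℝ → ℝ, (∃ x ∈ Set.Icc (0:ℝ) 1, φ x ≠ 0) ∧
      Differentiable ℝ φ ∧ Differentiable ℝ (deriv φ) ∧
      (∀ x ∈ Set.Icc (0:ℝ) 1, deriv (deriv φ) x = (1 + μ) * φ x) ∧
      -(deriv φ 0) = lam * φ 0 ∧
      deriv φ 1 = lam * φ 1 := by
  rintro ⟨φ, ⟨x₀, hx₀, hφx₀⟩, hφ, hφ', hode, h0, h1⟩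
  have hφc := hφ.continuous
  have hφ'c := hφ'.continuous
  have henergy : ∫ x in (0:ℝ)..1, deriv φ x ^ 2 + (1 + μ) * φ x ^ 2
      = lam * (φ 0 ^ 2 + φ 1 ^ 2) := by
    rw [integral_deriv_sq_add_mul_sq_eq (1 + μ) zero_le_one hφ hφ' hode, h1,
      show deriv φ 0 = -(lam * φ 0) by linarith]
    ring
  have htrace := tanh_mul_sq_add_sq_le_integral zero_le_one hφ hφ'c
  rw [sub_zero, tanh_one_half] at htrace
  have hmono : ∫ x in (0:ℝ)..1, deriv φ x ^ 2 + φ x ^ 2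
      ≤ ∫ x in (0:ℝ)..1, deriv φ x ^ 2 + (1 + μ) * φ x ^ 2 :=
    integral_mono_on zero_le_one (by apply Continuous.intervalIntegrable; fun_prop)
      (by apply Continuous.intervalIntegrable; fun_prop) fun x _ => by nlinarith [sq_nonneg (φ x)]
  have hpos : 0 < ∫ x in (0:ℝ)..1, deriv φ x ^ 2 + (1 + μ) * φ x ^ 2 :=
    integral_pos zero_lt_one (by fun_prop) (fun x _ => by positivity) ⟨x₀, hx₀, by positivity⟩
  have hboundary : φ 0 ^ 2 + φ 1 ^ 2 = 0 :=
    le_antisymm (by nlinarith) (by positivity)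
  rw [hboundary, mul_zero] at henergy
  exact hpos.ne' henergy
end
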